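/- Exact least-squares solution at augmented critical points: Let g : ℝ^p × ℝ^d → ℝ be a parametric Morse-Bott function and let (x₀,y₀) satisfy ∂_y g(x₀,y₀) = 0. Set A := ∂²_{yy} g(x₀,y₀) and B := ∂²_{xy} g(x₀,y₀). Then B lies in the range of A: there exists a matrix U such that B = U A. -/

import Mathlib

noncomputable section

open Set Filter Topology Metric RealInnerProductSpace

abbrev Euc (n : ℕ) : Type := EuclideanSpace ℝ (Fin n)

variable {p d : ℕ}

/-- Gradient of `g` with respect to the second variable. -/
noncomputable def gradY (g : Euc p × Euc d → ℝ) (x : Euc p) (y : Euc d) : Euc d :=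
  gradient (fun y' => g (x, y')) y

/-- Hessian `∂²_{yy} g` as a continuous linear map. -/
noncomputable def hessYY (g : Euc p × Euc d → ℝ) (x : Euc p) (y : Euc d) :
    Euc d →L[ℝ] Euc d :=
  fderiv ℝ (fun y' => gradY g x y') y

/-- Mixed Hessian `∂²_{xy} g` as a continuous linear map. -/
noncomputable def hessXY (g : Euc p × Euc d → ℝ) (x : Euc p) (y : Euc d) :
    Euc p →L[ℝ] Euc d :=
  fderiv ℝ (fun x' => gradY g x' y) x

/-- Augmented critical set. -/
def augCrit (g : Euc p × Euc d → ℝ) : Set (Euc p × Euc d) :=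
  {z | gradY g z.1 z.2 = 0}

/-- `S` is a `C²` embedded submanifold of dimension `k` of `E`. -/
def IsC2Submanifold {E : Type*} [NormedAddCommGroup E] [NormedSpace ℝ E]
    (k : ℕ) (S : Set E) : Prop :=
  ∀ z ∈ S, ∃ (W : Submodule ℝ E) (U V : Set E) (ψ ψinv : E → E),
    Module.finrank ℝ W = k ∧
    IsOpen U ∧ z ∈ U ∧ IsOpen V ∧
    ContDiffOn ℝ 2 ψ U ∧ ContDiffOn ℝ 2 ψinv V ∧
    (∀ u ∈ U, ψinv (ψ u) = u) ∧ (∀ v ∈ V, ψ (ψinv v) = v) ∧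
    ψ '' U = V ∧ ψ '' (U ∩ S) = V ∩ (W : Set E)

/-- Parametric Morse–Bott function. -/
def IsParamMorseBott (g : Euc p × Euc d → ℝ) : Prop :=
  ∀ z : Euc p × Euc d, gradY g z.1 z.2 = 0 →
    ∃ V : Set (Euc p × Euc d), IsOpen V ∧ z ∈ V ∧
      IsConnected (augCrit g ∩ V) ∧
      IsC2Submanifold (p + Module.finrank ℝ (LinearMap.ker (hessYY g z.1 z.2).toLinearMap))
        (augCrit g ∩ V)

/-- `g` is `L`-smooth in `y` for some `L > 0`: the `y`-gradient is `L`-Lipschitz in `y`. -/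
def SmoothInY (g : Euc p × Euc d → ℝ) : Prop :=
  ∃ L : NNReal, 0 < L ∧ ∀ x, LipschitzWith L (fun y => gradY g x y)

/-- `g` is coercive in `y`: `g (x, y) → +∞` as `‖y‖ → +∞`. -/
def CoerciveInY (g : Euc p × Euc d → ℝ) : Prop :=
  ∀ x, Tendsto (fun y : Euc d => g (x, y)) (comap (fun y : Euc d => ‖y‖) atTop) atTop

/-- `φflow` is the gradient flow of `y ↦ g (x, y)` started at `y`. -/
def IsGradFlow (g : Euc p × Euc d → ℝ) (φflow : ℝ → Euc p → Euc d → Euc d) : Prop :=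
  (∀ x y, φflow 0 x y = y) ∧
  ∀ x y, ∀ t ∈ Ici (0:ℝ),
    HasDerivWithinAt (fun s => φflow s x y) (-(gradY g x (φflow t x y))) (Ici 0) t

/-- `φsel` is the selection obtained as the limit of the gradient flow `φflow`. -/
def IsFlowSelection (g : Euc p × Euc d → ℝ) (φflow : ℝ → Euc p → Euc d → Euc d)
    (φsel : Euc p → Euc d → Euc d) : Prop :=
  IsGradFlow g φflow ∧ ∀ x y, Tendsto (fun t => φflow t x y) atTop (𝓝 (φsel x y))

/-- Moore–Penrose pseudo-inverse, characterized by the four Penrose conditions. -/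
def IsMPInv {E : Type*} [NormedAddCommGroup E] [InnerProductSpace ℝ E] [CompleteSpace E]
    (A B : E →L[ℝ] E) : Prop :=
  A ∘L B ∘L A = A ∧ B ∘L A ∘L B = B ∧
  ContinuousLinearMap.adjoint (A ∘L B) = A ∘L B ∧
  ContinuousLinearMap.adjoint (B ∘L A) = B ∘L A

/-!
Write `F = ∂_y g`, so that the augmented critical set is `F⁻¹(0)` and `T = DF(x₀, y₀)` has the
blocks `B = T ∘ inl` and `A = T ∘ inr`. Since `F` vanishes on the critical manifold, its tangent
space at `(x₀, y₀)` lies in `ker T`; by the Morse–Bott condition it has dimension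
`p + dim ker A`. Rank–nullity then gives `rank T ≤ rank A`, so `range A = range T ⊇ range B`,
and `B` factors through `A`.
-/

section LinearAlgebra

open LinearMap

theorem LinearMap.exists_comp_eq_of_range_le {R E F G : Type*} [Semiring R]
    [AddCommMonoid E] [Module R E] [Module.Projective R E] [AddCommMonoid F] [Module R F]
    [AddCommMonoid G] [Module R G] (A : F →ₗ[R] G) (B : E →ₗ[R] G) (h : range B ≤ range A) :
    ∃ U : E →ₗ[R] F, A ∘ₗ U = B := by
  obtain ⟨U, hU⟩ := Module.projective_lifting_property A.rangeRestrict
    (B.codRestrict _ fun x => h (mem_range_self B x)) A.surjective_rangeRestrict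
  exact ⟨U, ext fun x => congrArg Subtype.val (LinearMap.congr_fun hU x)⟩

theorem LinearMap.range_comp_inl_le_range_comp_inr_of_finrank_ker_le {K E F G : Type*} [Field K]
    [AddCommGroup E] [Module K E] [FiniteDimensional K E] [AddCommGroup F] [Module K F]
    [FiniteDimensional K F] [AddCommGroup G] [Module K G] (T : E × F →ₗ[K] G)
    (hker : Module.finrank K E + Module.finrank K (ker (T ∘ₗ inr K E F)) ≤
      Module.finrank K (ker T)) :
    range (T ∘ₗ inl K E F) ≤ range (T ∘ₗ inr K E F) := by
  have hT := T.finrank_range_add_finrank_ker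
  have hA := (T ∘ₗ inr K E F).finrank_range_add_finrank_ker
  rw [Module.finrank_prod] at hT
  have hrange : range (T ∘ₗ inr K E F) = range T :=
    Submodule.eq_of_le_of_finrank_le (range_comp_le_range _ _) (by omega)
  exact hrange ▸ range_comp_le_range _ _

end LinearAlgebra

section Calculus

variable {𝕜 E F : Type*} [NontriviallyNormedField 𝕜] [NormedAddCommGroup E] [NormedSpace 𝕜 E]
  [NormedAddCommGroup F] [NormedSpace 𝕜 F]

theorem HasFDerivAt.injective_of_eventually_leftInverse {f : E → F} {g : F → E}
    {f' : E →L[𝕜] F} {g' : F →L[𝕜] E} {a : F} (hg : HasFDerivAt g g' a)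
    (hf : HasFDerivAt f f' (g a)) (hfg : f ∘ g =ᶠ[𝓝 a] id) :
    Function.Injective g' := by
  have hcomp : f' ∘L g' = ContinuousLinearMap.id 𝕜 F :=
    ((hf.comp a hg).congr_of_eventuallyEq hfg.symm).unique (hasFDerivAt_id a)
  exact Function.LeftInverse.injective fun y => by
    simpa using DFunLike.congr_fun hcomp y

theorem HasFDerivAt.apply_eq_zero_of_eqOn_submodule {f : E → F} {f' : E →L[𝕜] F} {a : E}
    {W : Submodule 𝕜 E} {V : Set E} (hf : HasFDerivAt f f' a) (ha : a ∈ W) (hV : V ∈ 𝓝 a)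
    (hzero : ∀ w ∈ V ∩ W, f w = 0) {w : E} (hw : w ∈ W) : f' w = 0 := by
  have hline : ∀ᶠ t in 𝓝 (0 : 𝕜), a + t • w ∈ V :=
    (continuous_const.add (continuous_id.smul continuous_const)).tendsto' 0 a (by simp) hV
  have hconst : (fun t : 𝕜 => f (a + t • w)) =ᶠ[𝓝 0] fun _ => 0 :=
    hline.mono fun t ht => hzero _ ⟨ht, W.add_mem ha (W.smul_mem t hw)⟩
  exact hf.hasLineDerivAt w |>.unique ((hasDerivAt_const 0 0).congr_of_eventuallyEq hconst)

end Calculus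

theorem IsC2Submanifold.le_finrank_ker_of_hasFDerivAt {E G : Type*} [NormedAddCommGroup E]
    [NormedSpace ℝ E] [FiniteDimensional ℝ E] [NormedAddCommGroup G] [NormedSpace ℝ G]
    {k : ℕ} {S : Set E} (hS : IsC2Submanifold k S) {F : E → G} (hFS : ∀ z ∈ S, F z = 0)
    {z : E} (hz : z ∈ S) {T : E →L[ℝ] G} (hT : HasFDerivAt F T z) :
    k ≤ Module.finrank ℝ (LinearMap.ker T.toLinearMap) := by
  obtain ⟨W, U, V, ψ, ψinv, rfl, hU, hzU, hV, hψ, hψinv, hleft, hright, -, himage⟩ := hS z hz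
  have hzW : ψ z ∈ V ∩ (W : Set E) := himage ▸ ⟨z, ⟨hzU, hz⟩, rfl⟩
  have hψinvz : ψinv (ψ z) = z := hleft z hzU
  obtain ⟨D, hD⟩ : DifferentiableAt ℝ ψinv (ψ z) :=
    (hψinv.contDiffAt (hV.mem_nhds hzW.1)).differentiableAt two_ne_zero
  have hDψ : HasFDerivAt ψ (fderiv ℝ ψ z) (ψinv (ψ z)) := by
    rw [hψinvz]
    exact ((hψ.contDiffAt (hU.mem_nhds hzU)).differentiableAt two_ne_zero).hasFDerivAt
  have hinj : Function.Injective D := hD.injective_of_eventually_leftInverse hDψ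
    (eventually_of_mem (hV.mem_nhds hzW.1) hright)
  have hTD : HasFDerivAt (F ∘ ψinv) (T ∘L D) (ψ z) := by
    rw [← hψinvz] at hT
    exact hT.comp _ hD
  have hker : ∀ w ∈ W, T (D w) = 0 := fun w hw =>
    hTD.apply_eq_zero_of_eqOn_submodule hzW.2 (hV.mem_nhds hzW.1) (fun v hv => by
      obtain ⟨u, ⟨huU, huS⟩, rfl⟩ := himage.symm ▸ hv
      simpa [hleft u huU] using hFS u huS) hw
  calc Module.finrank ℝ W
      = Module.finrank ℝ (W.map D.toLinearMap) :=
        LinearEquiv.finrank_eq (Submodule.equivMapOfInjective _ hinj W)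
    _ ≤ Module.finrank ℝ (LinearMap.ker T.toLinearMap) :=
        Submodule.finrank_mono (Submodule.map_le_iff_le_comap.2 hker)

section PartialDerivatives

open ContinuousLinearMap

variable {g : Euc p × Euc d → ℝ}

theorem gradY_eq_toDual_symm (hg : Differentiable ℝ g) (x : Euc p) (y : Euc d) :
    gradY g x y = (InnerProductSpace.toDual ℝ (Euc d)).symm (fderiv ℝ g (x, y) ∘L inr ℝ _ _) :=
  congrArg _ ((hg (x, y)).hasFDerivAt.comp y (hasFDerivAt_prodMk_right x y)).fderiv

theorem contDiff_uncurry_gradY {n : WithTop ℕ∞} (hg : ContDiff ℝ (n + 1) g) :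
    ContDiff ℝ n (Function.uncurry (gradY g)) := by
  have hdiff : Differentiable ℝ g := hg.differentiable (by simp)
  have : Function.uncurry (gradY g) =
      fun z => (InnerProductSpace.toDual ℝ (Euc d)).symm (fderiv ℝ g z ∘L inr ℝ _ _) := by
    funext z
    exact gradY_eq_toDual_symm hdiff z.1 z.2
  rw [this]
  exact (InnerProductSpace.toDual ℝ (Euc d)).symm.contDiff.comp
    ((hg.fderiv_right le_rfl).clm_comp contDiff_const)

variable {x : Euc p} {y : Euc d}

theorem hessYY_eq_fderiv_comp_inr (hF : DifferentiableAt ℝ (Function.uncurry (gradY g)) (x, y)) :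
    hessYY g x y = fderiv ℝ (Function.uncurry (gradY g)) (x, y) ∘L inr ℝ _ _ :=
  (hF.hasFDerivAt.comp y (hasFDerivAt_prodMk_right x y)).fderiv

theorem hessXY_eq_fderiv_comp_inl (hF : DifferentiableAt ℝ (Function.uncurry (gradY g)) (x, y)) :
    hessXY g x y = fderiv ℝ (Function.uncurry (gradY g)) (x, y) ∘L inl ℝ _ _ :=
  (hF.hasFDerivAt.comp x (hasFDerivAt_prodMk_left (𝕜 := ℝ) x y) :).fderiv

end PartialDerivatives

/-- Exact least-squares solution at augmented critical points. -/
theorem exact_least_squares_solution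
    {p d : ℕ} (g : Euc p × Euc d → ℝ)
    (hg : ContDiff ℝ 2 g) (hmb : IsParamMorseBott g)
    (x₀ : Euc p) (y₀ : Euc d) (hcrit : gradY g x₀ y₀ = 0) :
    ∃ U : Euc p →L[ℝ] Euc d, hessXY g x₀ y₀ = (hessYY g x₀ y₀) ∘L U := by
  set F := Function.uncurry (gradY g)
  have hF : DifferentiableAt ℝ F (x₀, y₀) :=
    (contDiff_uncurry_gradY (n := 1) hg).differentiable one_ne_zero _
  obtain ⟨V, -, hV, -, hsub⟩ := hmb (x₀, y₀) hcrit
  have hdim := hsub.le_finrank_ker_of_hasFDerivAt (fun _ hz => hz.1) ⟨hcrit, hV⟩ hF.hasFDerivAt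
  rw [hessYY_eq_fderiv_comp_inr hF] at hdim
  obtain ⟨U, hU⟩ := LinearMap.exists_comp_eq_of_range_le _ _
    (LinearMap.range_comp_inl_le_range_comp_inr_of_finrank_ker_le
      (fderiv ℝ F (x₀, y₀)).toLinearMap (by rw [finrank_euclideanSpace_fin]; exact hdim))
  refine ⟨LinearMap.toContinuousLinearMap U, ?_⟩
  rw [hessXY_eq_fderiv_comp_inl hF, hessYY_eq_fderiv_comp_inr hF]
  ext1 v
  exact (LinearMap.congr_fun hU v).symm

end
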